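/- arXiv:1706.06017 — 3 statements merged into one kernel-verified Lean document; each statement's English description precedes it below -/
import Mathlib

section
/- Let 1 ≤ p < q < ∞ with 1/r = 1/p − 1/q, let X be a Banach function lattice on a σ-finite measure space, E a Banach space, and T : X → E a bounded linear operator. Then: (a) if T is p-summing (there is C > 0 with (∑_{k=1}^n ‖T x_k‖_E^p)^{1/p} ≤ C sup_{x*∈B_{X*}} (∑_{k=1}^n |⟨x_k, x*⟩|^p)^{1/p} for all finite sequences), then T is p-strongly q-concave; (b) if T is p-strongly q-concave with constant C, then T is q-concave with constant C, i.e., (∑_{k=1}^n ‖T x_k‖_E^q)^{1/q} ≤ C ‖(∑_{k=1}^n |x_k|^q)^{1/q}‖_X for all finite sequences (x_k) in X. -/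
open MeasureTheory Filter

noncomputable section

section Preamble

variable {Ω : Type} [MeasurableSpace Ω] {μ : Measure Ω}

/-- The a.e.-class of `ω ↦ |f ω| ^ e` (real power). -/
def rpowAbs (e : ℝ) (f : Ω →ₘ[μ] ℝ) : Ω →ₘ[μ] ℝ :=
  AEEqFun.mk (fun ω => |f ω| ^ e)
    (((measurable_abs.comp_aemeasurable f.aestronglyMeasurable.aemeasurable).pow
        aemeasurable_const).aestronglyMeasurable)

/-- The a.e.-class of `ω ↦ (∑ k, |x k ω| ^ p) ^ (1/p)`. -/
def pSum (p : ℝ) {n : ℕ} (x : Fin n → (Ω →ₘ[μ] ℝ)) : Ω →ₘ[μ] ℝ :=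
  AEEqFun.mk (fun ω => (∑ k, |x k ω| ^ p) ^ p⁻¹)
    (((Finset.aemeasurable_fun_sum Finset.univ fun k _ =>
        ((measurable_abs.comp_aemeasurable (x k).aestronglyMeasurable.aemeasurable).pow
          aemeasurable_const)).pow
      aemeasurable_const).aestronglyMeasurable)

/-- A Banach function lattice on a measure space `(Ω, μ)`: an order ideal of `L⁰(μ)`
equipped with a complete lattice norm. -/
structure BFL (Ω : Type) [MeasurableSpace Ω] (μ : Measure Ω) where
  mem : (Ω →ₘ[μ] ℝ) → Prop
  nrm : (Ω →ₘ[μ] ℝ) → ℝ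
  zero_mem : mem 0
  add_mem : ∀ f g, mem f → mem g → mem (f + g)
  smul_mem : ∀ (c : ℝ) f, mem f → mem (c • f)
  ideal : ∀ f g, mem g → |f| ≤ |g| → mem f
  nrm_nonneg : ∀ f, 0 ≤ nrm f
  nrm_eq_zero : ∀ f, mem f → nrm f = 0 → f = 0
  nrm_triangle : ∀ f g, mem f → mem g → nrm (f + g) ≤ nrm f + nrm g
  nrm_smul : ∀ (c : ℝ) f, mem f → nrm (c • f) = |c| * nrm f
  nrm_mono : ∀ f g, mem g → |f| ≤ |g| → nrm f ≤ nrm g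
  complete : ∀ u : ℕ → (Ω →ₘ[μ] ℝ), (∀ n, mem (u n)) →
    (∀ ε : ℝ, 0 < ε → ∃ N, ∀ m ≥ N, ∀ k ≥ N, nrm (u m - u k) < ε) →
    ∃ f, mem f ∧ Tendsto (fun n => nrm (u n - f)) atTop (nhds 0)

/-- `p`-convexity with constant `C`. -/
def BFL.pConvex (X : BFL Ω μ) (p C : ℝ) : Prop :=
  ∀ (n : ℕ) (x : Fin n → (Ω →ₘ[μ] ℝ)), (∀ k, X.mem (x k)) →
    X.mem (pSum p x) ∧ X.nrm (pSum p x) ≤ C * (∑ k, X.nrm (x k) ^ p) ^ p⁻¹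

/-- `p`-concavity with constant `C`. -/
def BFL.pConcave (X : BFL Ω μ) (p C : ℝ) : Prop :=
  ∀ (n : ℕ) (x : Fin n → (Ω →ₘ[μ] ℝ)), (∀ k, X.mem (x k)) →
    (∑ k, X.nrm (x k) ^ p) ^ p⁻¹ ≤ C * X.nrm (pSum p x)

/-- Order continuity of a function norm: decreasing sequences with infimum `0`
have norms tending to `0`. -/
def OrderContOn (mem : (Ω →ₘ[μ] ℝ) → Prop) (nrm : (Ω →ₘ[μ] ℝ) → ℝ) : Prop :=
  ∀ f : ℕ → (Ω →ₘ[μ] ℝ), (∀ n, mem (f n)) → (∀ n, f (n + 1) ≤ f n) → (∀ n, 0 ≤ f n) →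
    (∀ g, (∀ n, g ≤ f n) → g ≤ 0) → Tendsto (fun n => nrm (f n)) atTop (nhds 0)

/-- Order continuity of a Banach function lattice. -/
def BFL.OrderCont (X : BFL Ω μ) : Prop := OrderContOn X.mem X.nrm

/-- The Fatou property. -/
def BFL.Fatou (X : BFL Ω μ) : Prop :=
  ∀ (f : ℕ → (Ω →ₘ[μ] ℝ)) (g : Ω →ₘ[μ] ℝ), (∀ n, X.mem (f n)) → (∀ n, 0 ≤ f n) →
    Monotone f → (∀ n, f n ≤ g) → (∀ h, (∀ n, f n ≤ h) → g ≤ h) →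
    BddAbove (Set.range fun n => X.nrm (f n)) →
    X.mem g ∧ Tendsto (fun n => X.nrm (f n)) atTop (nhds (X.nrm g))

/-- The closed unit ball `B_r^n` of `ℓ_r^n` where `1/r = 1/p - 1/q` (`r = ∞` when `p = q`). -/
def strongBall (p q : ℝ) (n : ℕ) : Set (Fin n → ℝ) :=
  {β | if p = q then ∀ k, |β k| ≤ 1 else ∑ k, |β k| ^ (1 / p - 1 / q)⁻¹ ≤ 1}

/-- `sup_{β ∈ B_r^n} ‖(∑_k |β_k x_k|^p)^{1/p}‖`, where `1/r = 1/p - 1/q`. -/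
def strongSup (nrm : (Ω →ₘ[μ] ℝ) → ℝ) (p q : ℝ) {n : ℕ} (x : Fin n → (Ω →ₘ[μ] ℝ)) : ℝ :=
  ⨆ β : strongBall p q n, nrm (pSum p fun k => β.1 k • x k)

/-- Membership in the `p`-concavification: `f ∈ X_p ↔ |f|^{1/p} ∈ X`. -/
def cMem (mem : (Ω →ₘ[μ] ℝ) → Prop) (p : ℝ) (f : Ω →ₘ[μ] ℝ) : Prop := mem (rpowAbs p⁻¹ f)

/-- The norm of the `p`-concavification: `‖f‖_{X_p} = ‖|f|^{1/p}‖_X ^ p`. -/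
def cNrm (nrm : (Ω →ₘ[μ] ℝ) → ℝ) (p : ℝ) (f : Ω →ₘ[μ] ℝ) : ℝ := nrm (rpowAbs p⁻¹ f) ^ p

/-- The positive part of the closed dual unit ball of a function norm: positive functionals
of norm at most one, as bare functions on `L⁰`. -/
def dualBallPos (mem : (Ω →ₘ[μ] ℝ) → Prop) (nrm : (Ω →ₘ[μ] ℝ) → ℝ) :
    Set ((Ω →ₘ[μ] ℝ) → ℝ) :=
  {φ | (∀ f g, mem f → mem g → φ (f + g) = φ f + φ g) ∧
       (∀ (c : ℝ) f, mem f → φ (c • f) = c * φ f) ∧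
       (∀ f, mem f → 0 ≤ f → 0 ≤ φ f) ∧
       (∀ f, mem f → |φ f| ≤ nrm f)}

/-- The closed dual unit ball of a function norm. -/
def dualBall (mem : (Ω →ₘ[μ] ℝ) → Prop) (nrm : (Ω →ₘ[μ] ℝ) → ℝ) :
    Set ((Ω →ₘ[μ] ℝ) → ℝ) :=
  {φ | (∀ f g, mem f → mem g → φ (f + g) = φ f + φ g) ∧
       (∀ (c : ℝ) f, mem f → φ (c • f) = c * φ f) ∧
       (∀ f, mem f → |φ f| ≤ nrm f)}

/-- The positive part of the dual unit ball, as a type carrying the weak* (pointwise)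
topology and its Borel σ-algebra. -/
def DualPos (mem : (Ω →ₘ[μ] ℝ) → Prop) (nrm : (Ω →ₘ[μ] ℝ) → ℝ) : Type _ :=
  ↥(dualBallPos mem nrm)

instance {mem : (Ω →ₘ[μ] ℝ) → Prop} {nrm : (Ω →ₘ[μ] ℝ) → ℝ} :
    TopologicalSpace (DualPos (μ := μ) mem nrm) :=
  inferInstanceAs (TopologicalSpace ↥(dualBallPos mem nrm))

instance {mem : (Ω →ₘ[μ] ℝ) → Prop} {nrm : (Ω →ₘ[μ] ℝ) → ℝ} :
    MeasurableSpace (DualPos (μ := μ) mem nrm) := borel _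

instance {mem : (Ω →ₘ[μ] ℝ) → Prop} {nrm : (Ω →ₘ[μ] ℝ) → ℝ} :
    BorelSpace (DualPos (μ := μ) mem nrm) := ⟨rfl⟩

/-- Evaluation of a functional in the dual ball. -/
def DualPos.app {mem : (Ω →ₘ[μ] ℝ) → Prop} {nrm : (Ω →ₘ[μ] ℝ) → ℝ}
    (φ : DualPos (μ := μ) mem nrm) (f : Ω →ₘ[μ] ℝ) : ℝ :=
  Subtype.val φ f

/-- The seminorm `‖f‖_{p,q,ν} = (∫ ⟨|f|^p, φ⟩^{q/p} dν(φ))^{1/q}`. -/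
def pqNrm {mem : (Ω →ₘ[μ] ℝ) → Prop} {nrm : (Ω →ₘ[μ] ℝ) → ℝ} (p q : ℝ)
    (ν : Measure (DualPos (μ := μ) mem nrm)) (f : Ω →ₘ[μ] ℝ) : ℝ :=
  (∫ φ, (DualPos.app φ (rpowAbs p f)) ^ (q / p) ∂ν) ^ q⁻¹

/-- Membership in the Köthe dual of a function space. -/
def kMem (mem : (Ω →ₘ[μ] ℝ) → Prop) (h : Ω →ₘ[μ] ℝ) : Prop :=
  ∀ f, mem f → ∫⁻ ω, ENNReal.ofReal |f ω * h ω| ∂μ < ⊤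

/-- The Köthe dual norm. -/
def kNrm (mem : (Ω →ₘ[μ] ℝ) → Prop) (nrm : (Ω →ₘ[μ] ℝ) → ℝ) (h : Ω →ₘ[μ] ℝ) : ℝ :=
  ⨆ f : {f : Ω →ₘ[μ] ℝ // mem f ∧ nrm f ≤ 1}, ∫ ω, |f.1 ω * h ω| ∂μ

/-- The positive part of the closed unit ball of the Köthe dual. -/
def kothePosBall (mem : (Ω →ₘ[μ] ℝ) → Prop) (nrm : (Ω →ₘ[μ] ℝ) → ℝ) :
    Set (Ω →ₘ[μ] ℝ) :=
  {h | 0 ≤ h ∧ ∀ f, mem f → ∫⁻ ω, ENNReal.ofReal |f ω * h ω| ∂μ ≤ ENNReal.ofReal (nrm f)}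

/-- The positive part of the Köthe-dual unit ball, as a type carrying the topology
`σ(X', X)` of pointwise convergence of the pairings, and its Borel σ-algebra. -/
def KBallPos (mem : (Ω →ₘ[μ] ℝ) → Prop) (nrm : (Ω →ₘ[μ] ℝ) → ℝ) : Type _ :=
  ↥(kothePosBall (μ := μ) mem nrm)

/-- The underlying function of an element of the Köthe-dual ball. -/
def KBallPos.fn {mem : (Ω →ₘ[μ] ℝ) → Prop} {nrm : (Ω →ₘ[μ] ℝ) → ℝ}
    (h : KBallPos (μ := μ) mem nrm) : Ω →ₘ[μ] ℝ :=
  Subtype.val h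

instance {mem : (Ω →ₘ[μ] ℝ) → Prop} {nrm : (Ω →ₘ[μ] ℝ) → ℝ} :
    TopologicalSpace (KBallPos (μ := μ) mem nrm) :=
  TopologicalSpace.induced
    (fun h => fun f : (Ω →ₘ[μ] ℝ) => ∫ ω, f ω * (KBallPos.fn h) ω ∂μ) Pi.topologicalSpace

instance {mem : (Ω →ₘ[μ] ℝ) → Prop} {nrm : (Ω →ₘ[μ] ℝ) → ℝ} :
    MeasurableSpace (KBallPos (μ := μ) mem nrm) := borel _

/-- Membership in the space `S^q_{X_p}(ξ)`. -/
def sMem {mem : (Ω →ₘ[μ] ℝ) → Prop} {nrm : (Ω →ₘ[μ] ℝ) → ℝ} (p q : ℝ)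
    (ξ : Measure (KBallPos (μ := μ) mem nrm)) (f : Ω →ₘ[μ] ℝ) : Prop :=
  (∫⁻ h, (∫⁻ ω, ENNReal.ofReal (|f ω| ^ p * (KBallPos.fn h) ω) ∂μ) ^ (q / p) ∂ξ) < ⊤

/-- The norm of the space `S^q_{X_p}(ξ)`:
`‖f‖ = (∫ (∫ |f|^p h dμ)^{q/p} dξ(h))^{1/q}`. -/
def sNrm {mem : (Ω →ₘ[μ] ℝ) → Prop} {nrm : (Ω →ₘ[μ] ℝ) → ℝ} (p q : ℝ)
    (ξ : Measure (KBallPos (μ := μ) mem nrm)) (f : Ω →ₘ[μ] ℝ) : ℝ :=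
  ((∫⁻ h, (∫⁻ ω, ENNReal.ofReal (|f ω| ^ p * (KBallPos.fn h) ω) ∂μ) ^ (q / p) ∂ξ) ^ q⁻¹).toReal

end Preamble

section Operators

/-- A bounded linear operator between Banach function lattices, as a map of `L⁰` spaces. -/
def IsBddOp {Ω₁ Ω₂ : Type} [MeasurableSpace Ω₁] [MeasurableSpace Ω₂]
    {μ₁ : Measure Ω₁} {μ₂ : Measure Ω₂} (X : BFL Ω₁ μ₁) (Y : BFL Ω₂ μ₂)
    (T : (Ω₁ →ₘ[μ₁] ℝ) → (Ω₂ →ₘ[μ₂] ℝ)) : Prop :=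
  (∀ f, X.mem f → Y.mem (T f)) ∧
  (∀ f g, X.mem f → X.mem g → T (f + g) = T f + T g) ∧
  (∀ (c : ℝ) f, X.mem f → T (c • f) = c • T f) ∧
  ∃ K, ∀ f, X.mem f → Y.nrm (T f) ≤ K * X.nrm f

/-- A bounded linear operator from a Banach function lattice into a normed space. -/
def IsBddOpE {Ω : Type} [MeasurableSpace Ω] {μ : Measure Ω} (X : BFL Ω μ) {E : Type}
    [NormedAddCommGroup E] [NormedSpace ℝ E] (T : (Ω →ₘ[μ] ℝ) → E) : Prop :=
  (∀ f g, X.mem f → X.mem g → T (f + g) = T f + T g) ∧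
  (∀ (c : ℝ) f, X.mem f → T (c • f) = c • T f) ∧
  ∃ K, ∀ f, X.mem f → ‖T f‖ ≤ K * X.nrm f

/-- `T : X → Y` is `(p₁,p₂)`-strongly `(q₁,q₂)`-concave with constant `C`:
`|∑ₖ ⟨T xₖ, yₖ'⟩| ≤ C · sup_{α ∈ B_{r₁}} ‖(∑ |αₖ xₖ|^{p₁})^{1/p₁}‖_X ·
sup_{β ∈ B_{r₂}} ‖(∑ |βₖ yₖ'|^{p₂})^{1/p₂}‖_{Y'}` for all finite sequences in `X` and `Y'`. -/
def StrongPair {Ω₁ Ω₂ : Type} [MeasurableSpace Ω₁] [MeasurableSpace Ω₂]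
    {μ₁ : Measure Ω₁} {μ₂ : Measure Ω₂} (X : BFL Ω₁ μ₁) (Y : BFL Ω₂ μ₂)
    (p₁ q₁ p₂ q₂ : ℝ) (T : (Ω₁ →ₘ[μ₁] ℝ) → (Ω₂ →ₘ[μ₂] ℝ)) (C : ℝ) : Prop :=
  ∀ (n : ℕ) (x : Fin n → (Ω₁ →ₘ[μ₁] ℝ)) (y : Fin n → (Ω₂ →ₘ[μ₂] ℝ)),
    (∀ k, X.mem (x k)) → (∀ k, kMem Y.mem (y k)) →
    |∑ k, ∫ ω, (T (x k)) ω * (y k) ω ∂μ₂| ≤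
      C * (strongSup X.nrm p₁ q₁ x * strongSup (kNrm Y.mem Y.nrm) p₂ q₂ y)

/-- A bounded `m`-linear operator on a product of Banach function lattices. -/
def MultilinearBdd {m : ℕ} {Ω : Fin m → Type} [∀ j, MeasurableSpace (Ω j)]
    {μ : ∀ j, Measure (Ω j)} (X : ∀ j, BFL (Ω j) (μ j))
    {Y : Type} [NormedAddCommGroup Y] [NormedSpace ℝ Y]
    (T : (∀ j, (Ω j →ₘ[μ j] ℝ)) → Y) : Prop :=
  (∀ x, (∀ j, (X j).mem (x j)) → ∀ j f g, (X j).mem f → (X j).mem g →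
      T (Function.update x j (f + g)) = T (Function.update x j f) + T (Function.update x j g)) ∧
  (∀ x, (∀ j, (X j).mem (x j)) → ∀ j (c : ℝ) f, (X j).mem f →
      T (Function.update x j (c • f)) = c • T (Function.update x j f)) ∧
  ∃ K, ∀ x, (∀ j, (X j).mem (x j)) → ‖T x‖ ≤ K * ∏ j, (X j).nrm (x j)

/-- An `m`-linear operator is `(p₁,…,p_m)`-strongly `(q₁,…,q_m)`-concave with constant `C`,
where `1/q = ∑ⱼ 1/qⱼ`:
`(∑ₖ ‖T(x¹ₖ,…,xᵐₖ)‖^q)^{1/q} ≤ C ∏ⱼ sup_{βʲ ∈ B_{rⱼ}} ‖(∑ₖ |βʲₖ xʲₖ|^{pⱼ})^{1/pⱼ}‖_{Xⱼ}`. -/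
def StronglyConcaveML {m : ℕ} {Ω : Fin m → Type} [∀ j, MeasurableSpace (Ω j)]
    {μ : ∀ j, Measure (Ω j)} (X : ∀ j, BFL (Ω j) (μ j)) (p q : Fin m → ℝ)
    {Y : Type} [NormedAddCommGroup Y]
    (T : (∀ j, (Ω j →ₘ[μ j] ℝ)) → Y) (C : ℝ) : Prop :=
  ∀ (n : ℕ) (x : ∀ j, Fin n → (Ω j →ₘ[μ j] ℝ)), (∀ j k, (X j).mem (x j k)) →
    (∑ k, ‖T fun j => x j k‖ ^ (∑ j, (q j)⁻¹)⁻¹) ^ (∑ j, (q j)⁻¹) ≤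
      C * ∏ j, strongSup (X j).nrm (p j) (q j) (x j)

/-- A Banach space, packaged as a structure. -/
structure BanachSpaceStruct where
  E : Type
  grp : NormedAddCommGroup E
  mod : NormedSpace ℝ E
  cpl : CompleteSpace E

attribute [instance] BanachSpaceStruct.grp BanachSpaceStruct.mod BanachSpaceStruct.cpl

end Operators

/-!
(a) Given `x₁, …, xₙ`, choose `β` in the unit ball of `ℓ^r` with `βₖ^r` proportional to
`‖T xₖ‖^q`; this is the equality case of Hölder's inequality for `1/p = 1/r + 1/q`, so
`(∑ ‖T (βₖ xₖ)‖^p)^{1/p} = (∑ ‖T xₖ‖^q)^{1/q}`. Apply `p`-summability to `(βₖ xₖ)` and bound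
`(∑ |x*(yₖ)|^p)^{1/p} ≤ ‖(∑ |yₖ|^p)^{1/p}‖_X` for `x* ∈ B_{X*}` by testing `x*` on
`∑ sign(x*(yₖ)) |x*(yₖ)|^{p-1} yₖ`, whose modulus is controlled pointwise by Hölder.

(b) Pointwise Hölder gives `(∑ |βₖ xₖ|^p)^{1/p} ≤ (∑ |xₖ|^q)^{1/q}` for `β ∈ B_r`, so the strong
supremum is at most `‖(∑ |xₖ|^q)^{1/q}‖_X`.
-/

namespace Real

open Finset

variable {ι : Type*} {s : Finset ι}

lemma rpow_sub_one_mul_self {a p : ℝ} (ha : 0 ≤ a) (hp : p ≠ 0) : a ^ (p - 1) * a = a ^ p := by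
  rw [← rpow_add_one' ha (by simpa using hp), sub_add_cancel]

lemma sum_rpow_rpow_inv_le_sum {r : ℝ} (hr : 1 ≤ r) {t : ι → ℝ} (ht : ∀ i ∈ s, 0 ≤ t i) :
    (∑ i ∈ s, t i ^ r) ^ r⁻¹ ≤ ∑ i ∈ s, t i := by
  have hr0 : 0 < r := zero_lt_one.trans_le hr
  have hT : 0 ≤ ∑ i ∈ s, t i := sum_nonneg ht
  have hle : ∑ i ∈ s, t i ^ r ≤ (∑ i ∈ s, t i) ^ r :=
    calc ∑ i ∈ s, t i ^ r = ∑ i ∈ s, t i ^ (r - 1) * t i :=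
          sum_congr rfl fun i hi => (rpow_sub_one_mul_self (ht i hi) hr0.ne').symm
      _ ≤ ∑ i ∈ s, (∑ j ∈ s, t j) ^ (r - 1) * t i := by
          refine sum_le_sum fun i hi => mul_le_mul_of_nonneg_right ?_ (ht i hi)
          exact rpow_le_rpow (ht i hi) (single_le_sum ht hi) (by linarith)
      _ = (∑ i ∈ s, t i) ^ r := by rw [← mul_sum, rpow_sub_one_mul_self hT hr0.ne']
  calc (∑ i ∈ s, t i ^ r) ^ r⁻¹ ≤ ((∑ i ∈ s, t i) ^ r) ^ r⁻¹ := by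
        gcongr
        exact sum_nonneg fun i hi => rpow_nonneg (ht i hi) _
    _ = ∑ i ∈ s, t i := rpow_rpow_inv hT hr0.ne'

lemma sum_rpow_sub_one_mul_le {p : ℝ} (hp : 1 ≤ p) {c t : ι → ℝ} (hc : ∀ i ∈ s, 0 ≤ c i)
    (ht : ∀ i ∈ s, 0 ≤ t i) :
    ∑ i ∈ s, c i ^ (p - 1) * t i ≤
      (∑ i ∈ s, c i ^ p) ^ ((p - 1) / p) * (∑ i ∈ s, t i ^ p) ^ p⁻¹ := by
  rcases hp.eq_or_lt with rfl | hp
  · simp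
  have hconj : HolderConjugate (p / (p - 1)) p :=
    (holderConjugate_iff.2 ⟨by rw [one_lt_div] <;> linarith, by field_simp; ring⟩)
  convert inner_le_Lp_mul_Lq_of_nonneg s (f := fun i => c i ^ (p - 1)) hconj
    (fun i hi => rpow_nonneg (hc i hi) _) ht using 3
  · refine sum_congr rfl fun i hi => ?_
    rw [← rpow_mul (hc i hi)]
    congr 1
    field_simp [(by linarith : p - 1 ≠ 0)]
  · rw [one_div_div]
  · rw [one_div]

lemma sum_mul_rpow_rpow_inv_le {p q : ℝ} (hp : 0 < p) (hpq : p < q) {b t : ι → ℝ}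
    (hb : ∀ i ∈ s, 0 ≤ b i) (ht : ∀ i ∈ s, 0 ≤ t i)
    (hb1 : ∑ i ∈ s, b i ^ (1 / p - 1 / q)⁻¹ ≤ 1) :
    (∑ i ∈ s, (b i * t i) ^ p) ^ p⁻¹ ≤ (∑ i ∈ s, t i ^ q) ^ q⁻¹ := by
  have hq : 0 < q := hp.trans hpq
  have hr : 0 < 1 / p - 1 / q := sub_pos.2 (one_div_lt_one_div_of_lt hp hpq)
  have htriple : HolderTriple (1 / p - 1 / q)⁻¹ q p :=
    ⟨by rw [inv_inv]; field_simp; ring, inv_pos.2 hr, hq⟩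
  have hbr : (∑ i ∈ s, b i ^ (1 / p - 1 / q)⁻¹) ^ (p / (1 / p - 1 / q)⁻¹) ≤ 1 :=
    rpow_le_one (sum_nonneg fun i hi => rpow_nonneg (hb i hi) _) hb1 (by positivity)
  have htq : 0 ≤ ∑ i ∈ s, t i ^ q := sum_nonneg fun i hi => rpow_nonneg (ht i hi) _
  calc (∑ i ∈ s, (b i * t i) ^ p) ^ p⁻¹
      ≤ ((∑ i ∈ s, t i ^ q) ^ (p / q)) ^ p⁻¹ := by
        gcongr
        · exact sum_nonneg fun i hi => rpow_nonneg (mul_nonneg (hb i hi) (ht i hi)) _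
        refine (Lr_rpow_le_Lp_mul_Lq_of_nonneg s htriple hb ht).trans ?_
        exact mul_le_of_le_one_left (rpow_nonneg htq _) hbr
    _ = (∑ i ∈ s, t i ^ q) ^ q⁻¹ := by
        rw [← rpow_mul htq]
        congr 1
        field_simp

lemma exists_sum_mul_rpow_rpow_inv_eq {p q : ℝ} (hp : 0 < p) (hpq : p < q) {a : ι → ℝ}
    (ha : ∀ i, 0 ≤ a i) :
    ∃ b : ι → ℝ, (∀ i, 0 ≤ b i) ∧ ∑ i ∈ s, b i ^ (1 / p - 1 / q)⁻¹ ≤ 1 ∧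
      (∑ i ∈ s, (b i * a i) ^ p) ^ p⁻¹ = (∑ i ∈ s, a i ^ q) ^ q⁻¹ := by
  have hq : 0 < q := hp.trans hpq
  have hr : 0 < 1 / p - 1 / q := sub_pos.2 (one_div_lt_one_div_of_lt hp hpq)
  set S := ∑ i ∈ s, a i ^ q
  have hS : 0 ≤ S := sum_nonneg fun i _ => rpow_nonneg (ha i) _
  rcases hS.eq_or_lt with hS0 | hS0
  · refine ⟨0, fun _ => le_rfl, ?_, ?_⟩
    · simp only [Pi.zero_apply, zero_rpow (inv_pos.2 hr).ne', sum_const_zero, zero_le_one]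
    simp [← hS0, zero_rpow hp.ne', zero_rpow (inv_pos.2 hp).ne', zero_rpow (inv_pos.2 hq).ne']
  have hu : ∀ i, 0 ≤ a i ^ q / S := fun i => div_nonneg (rpow_nonneg (ha i) _) hS
  refine ⟨fun i => (a i ^ q / S) ^ (1 / p - 1 / q), fun i => rpow_nonneg (hu i) _, ?_, ?_⟩
  · rw [sum_congr rfl fun i _ => by rw [← rpow_mul (hu i), mul_inv_cancel₀ hr.ne', rpow_one],
      ← sum_div, div_self hS0.ne']
  -- With `θ = p / q`, each term `(bᵢ aᵢ)^p` is `(aᵢ^q / S)^(1-θ) (aᵢ^q)^θ = aᵢ^q / S^(1-θ)`.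
  have hterm : ∀ i, ((a i ^ q / S) ^ (1 / p - 1 / q) * a i) ^ p = a i ^ q / S ^ (1 - p / q) := by
    intro i
    have hθ : (1 - p / q) + p / q ≠ 0 := by norm_num
    rw [mul_rpow (rpow_nonneg (hu i) _) (ha i), ← rpow_mul (hu i),
      show (1 / p - 1 / q) * p = 1 - p / q by field_simp,
      show a i ^ p = (a i ^ q) ^ (p / q) by rw [← rpow_mul (ha i)]; field_simp,
      div_rpow (rpow_nonneg (ha i) _) hS, div_mul_eq_mul_div,
      ← rpow_add' (rpow_nonneg (ha i) _) hθ, sub_add_cancel, rpow_one]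
  have hquot : S / S ^ (1 - p / q) = S ^ (p / q) := by
    rw [div_eq_iff (rpow_pos_of_pos hS0 _).ne', ← rpow_add hS0, add_sub_cancel, rpow_one]
  rw [sum_congr rfl fun i _ => hterm i, ← sum_div, hquot, ← rpow_mul hS]
  congr 1
  field_simp

end Real

namespace MeasureTheory.AEEqFun

lemma coeFn_finset_sum {α β ι : Type*} [MeasurableSpace α] {μ : Measure α} [TopologicalSpace β]
    [AddCommMonoid β] [ContinuousAdd β] (s : Finset ι) (f : ι → α →ₘ[μ] β) :
    ⇑(∑ i ∈ s, f i) =ᵐ[μ] fun a => ∑ i ∈ s, f i a := by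
  classical
  induction s using Finset.induction_on with
  | empty =>
    simp only [Finset.sum_empty]
    exact coeFn_zero
  | insert i s hi ih =>
    filter_upwards [coeFn_add (f i) (∑ j ∈ s, f j), ih] with a hadd hsum
    rw [Finset.sum_insert hi, hadd, Pi.add_apply, hsum, Finset.sum_insert hi]

end MeasureTheory.AEEqFun

section Lattice

variable {Ω : Type} [MeasurableSpace Ω] {μ : Measure Ω}

lemma coeFn_pSum (p : ℝ) {n : ℕ} (x : Fin n → (Ω →ₘ[μ] ℝ)) :
    ⇑(pSum p x) =ᵐ[μ] fun ω => (∑ k, |x k ω| ^ p) ^ p⁻¹ :=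
  AEEqFun.coeFn_mk _ _

lemma mem_strongBall_iff {p q : ℝ} (hpq : p ≠ q) {n : ℕ} {β : Fin n → ℝ} :
    β ∈ strongBall p q n ↔ ∑ k, |β k| ^ (1 / p - 1 / q)⁻¹ ≤ 1 := by
  simp only [strongBall, Set.mem_ofPred_eq, if_neg hpq]

lemma zero_mem_strongBall {p q : ℝ} (hp : 0 < p) (hpq : p < q) {n : ℕ} :
    (0 : Fin n → ℝ) ∈ strongBall p q n := by
  have hr : (1 / p - 1 / q)⁻¹ ≠ 0 := (inv_pos.2 (sub_pos.2 (one_div_lt_one_div_of_lt hp hpq))).ne'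
  rw [mem_strongBall_iff hpq.ne]
  simp only [Pi.zero_apply, abs_zero, Real.zero_rpow hr, Finset.sum_const_zero, zero_le_one]

namespace BFL

variable (X : BFL Ω μ)

lemma mem_of_ae_abs_le {f g : Ω →ₘ[μ] ℝ} (hg : X.mem g) (h : ∀ᵐ ω ∂μ, |f ω| ≤ |g ω|) :
    X.mem f := by
  refine X.ideal f g hg ?_
  rw [← AEEqFun.coeFn_le]
  filter_upwards [AEEqFun.coeFn_abs f, AEEqFun.coeFn_abs g, h] with ω hf hg h
  rw [hf, hg]
  exact h

lemma nrm_le_of_ae_abs_le {f g : Ω →ₘ[μ] ℝ} (hg : X.mem g) {c : ℝ} (hc : 0 ≤ c)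
    (h : ∀ᵐ ω ∂μ, |f ω| ≤ c * |g ω|) : X.nrm f ≤ c * X.nrm g := by
  rw [← abs_of_nonneg hc, ← X.nrm_smul c g hg]
  refine X.nrm_mono f (c • g) (X.smul_mem c g hg) ?_
  rw [← AEEqFun.coeFn_le]
  filter_upwards [AEEqFun.coeFn_abs f, AEEqFun.coeFn_abs (c • g), AEEqFun.coeFn_smul c g, h]
    with ω hf hcg hsmul h
  rw [hf, hcg, hsmul, Pi.smul_apply, smul_eq_mul, abs_mul, abs_of_nonneg hc]
  exact h

lemma sum_mem {ι : Type*} (s : Finset ι) {f : ι → Ω →ₘ[μ] ℝ} (hf : ∀ i ∈ s, X.mem (f i)) :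
    X.mem (∑ i ∈ s, f i) :=
  Finset.sum_induction f X.mem X.add_mem X.zero_mem hf

lemma mem_pSum {p : ℝ} (hp : 1 ≤ p) {n : ℕ} {x : Fin n → (Ω →ₘ[μ] ℝ)}
    (hx : ∀ k, X.mem (x k)) : X.mem (pSum p x) := by
  have habs : ∀ k ∈ Finset.univ, X.mem |x k| := fun k _ =>
    X.mem_of_ae_abs_le (hx k) <| by
      filter_upwards [AEEqFun.coeFn_abs (x k)] with ω h
      rw [h, abs_abs]
  refine X.mem_of_ae_abs_le (X.sum_mem Finset.univ habs) ?_
  filter_upwards [coeFn_pSum p x, AEEqFun.coeFn_finset_sum Finset.univ fun k => |x k|,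
    ae_all_iff.2 fun k => AEEqFun.coeFn_abs (x k)] with ω hp_sum hsum habs
  have hpos : (0 : ℝ) ≤ (∑ k, |x k ω| ^ p) ^ p⁻¹ := by positivity
  simp only [hp_sum, hsum, habs, abs_of_nonneg hpos]
  exact (Real.sum_rpow_rpow_inv_le_sum hp fun k _ => abs_nonneg _).trans (le_abs_self _)

lemma nrm_pSum_smul_le {p q : ℝ} (hp : 1 ≤ p) (hpq : p < q) {n : ℕ} {x : Fin n → (Ω →ₘ[μ] ℝ)}
    (hx : ∀ k, X.mem (x k)) {β : Fin n → ℝ} (hβ : β ∈ strongBall p q n) :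
    X.nrm (pSum p fun k => β k • x k) ≤ X.nrm (pSum q x) := by
  rw [← one_mul (X.nrm (pSum q x))]
  refine X.nrm_le_of_ae_abs_le (X.mem_pSum (hp.trans hpq.le) hx) zero_le_one ?_
  filter_upwards [coeFn_pSum p fun k => β k • x k, coeFn_pSum q x,
    ae_all_iff.2 fun k => AEEqFun.coeFn_smul (β k) (x k)] with ω hβx hx hsmul
  simp only [hβx, hx, hsmul, Pi.smul_apply, smul_eq_mul, abs_mul, one_mul]
  rw [abs_of_nonneg (by positivity), abs_of_nonneg (by positivity)]
  exact Real.sum_mul_rpow_rpow_inv_le (zero_lt_one.trans_le hp) hpq (fun _ _ => abs_nonneg _)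
    (fun _ _ => abs_nonneg _) ((mem_strongBall_iff hpq.ne).1 hβ)

lemma bddAbove_strongSup_range {p q : ℝ} (hp : 1 ≤ p) (hpq : p < q) {n : ℕ}
    {x : Fin n → (Ω →ₘ[μ] ℝ)} (hx : ∀ k, X.mem (x k)) :
    BddAbove (Set.range fun β : strongBall p q n => X.nrm (pSum p fun k => β.1 k • x k)) :=
  ⟨X.nrm (pSum q x), by
    rintro _ ⟨β, rfl⟩
    exact X.nrm_pSum_smul_le hp hpq hx β.2⟩

lemma strongSup_le_nrm_pSum {p q : ℝ} (hp : 1 ≤ p) (hpq : p < q) {n : ℕ}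
    {x : Fin n → (Ω →ₘ[μ] ℝ)} (hx : ∀ k, X.mem (x k)) :
    strongSup X.nrm p q x ≤ X.nrm (pSum q x) := by
  have : Nonempty (strongBall p q n) := ⟨⟨0, zero_mem_strongBall (zero_lt_one.trans_le hp) hpq⟩⟩
  exact ciSup_le fun β => X.nrm_pSum_smul_le hp hpq hx β.2

lemma nrm_pSum_smul_le_strongSup {p q : ℝ} (hp : 1 ≤ p) (hpq : p < q) {n : ℕ}
    {x : Fin n → (Ω →ₘ[μ] ℝ)} (hx : ∀ k, X.mem (x k)) {β : Fin n → ℝ}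
    (hβ : β ∈ strongBall p q n) :
    X.nrm (pSum p fun k => β k • x k) ≤ strongSup X.nrm p q x :=
  le_ciSup (X.bddAbove_strongSup_range hp hpq hx) ⟨β, hβ⟩

lemma apply_sum_smul_of_mem_dualBall {φ : (Ω →ₘ[μ] ℝ) → ℝ} (hφ : φ ∈ dualBall X.mem X.nrm)
    {ι : Type*} (s : Finset ι) (γ : ι → ℝ) {y : ι → Ω →ₘ[μ] ℝ} (hy : ∀ i ∈ s, X.mem (y i)) :
    φ (∑ i ∈ s, γ i • y i) = ∑ i ∈ s, γ i * φ (y i) := by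
  obtain ⟨hadd, hsmul, -⟩ := hφ
  classical
  induction s using Finset.induction_on with
  | empty => simpa using hsmul 0 0 X.zero_mem
  | insert i s hi ih =>
    have hys : ∀ j ∈ s, X.mem (y j) := fun j hj => hy j (Finset.mem_insert_of_mem hj)
    have hyi : X.mem (y i) := hy i (Finset.mem_insert_self i s)
    rw [Finset.sum_insert hi, Finset.sum_insert hi,
      hadd _ _ (X.smul_mem _ _ hyi) (X.sum_mem s fun j hj => X.smul_mem _ _ (hys j hj)),
      hsmul _ _ hyi, ih hys]

lemma nrm_sum_smul_le {p : ℝ} (hp : 1 ≤ p) {n : ℕ} {y : Fin n → (Ω →ₘ[μ] ℝ)}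
    (hy : ∀ k, X.mem (y k)) {c γ : Fin n → ℝ} (hc : ∀ k, 0 ≤ c k)
    (hγ : ∀ k, |γ k| ≤ c k ^ (p - 1)) :
    X.nrm (∑ k, γ k • y k) ≤ (∑ k, c k ^ p) ^ ((p - 1) / p) * X.nrm (pSum p y) := by
  refine X.nrm_le_of_ae_abs_le (X.mem_pSum hp hy)
    (Real.rpow_nonneg (Finset.sum_nonneg fun k _ => Real.rpow_nonneg (hc k) _) _) ?_
  filter_upwards [AEEqFun.coeFn_finset_sum Finset.univ fun k => γ k • y k, coeFn_pSum p y,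
    ae_all_iff.2 fun k => AEEqFun.coeFn_smul (γ k) (y k)] with ω hsum hpSum hsmul
  simp only [hsum, hpSum, hsmul, Pi.smul_apply, smul_eq_mul]
  rw [abs_of_nonneg (by positivity : (0 : ℝ) ≤ (∑ k, |y k ω| ^ p) ^ p⁻¹)]
  calc |∑ k, γ k * y k ω| ≤ ∑ k, c k ^ (p - 1) * |y k ω| := by
        refine (Finset.abs_sum_le_sum_abs _ _).trans (Finset.sum_le_sum fun k _ => ?_)
        rw [abs_mul]
        exact mul_le_mul_of_nonneg_right (hγ k) (abs_nonneg _)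
    _ ≤ (∑ k, c k ^ p) ^ ((p - 1) / p) * (∑ k, |y k ω| ^ p) ^ p⁻¹ :=
        Real.sum_rpow_sub_one_mul_le hp (fun k _ => hc k) fun _ _ => abs_nonneg _

lemma sum_abs_rpow_rpow_inv_le_nrm_pSum {p : ℝ} (hp : 1 ≤ p) {n : ℕ}
    {y : Fin n → (Ω →ₘ[μ] ℝ)} (hy : ∀ k, X.mem (y k)) {φ : (Ω →ₘ[μ] ℝ) → ℝ}
    (hφ : φ ∈ dualBall X.mem X.nrm) :
    (∑ k, |φ (y k)| ^ p) ^ p⁻¹ ≤ X.nrm (pSum p y) := by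
  have hp0 : 0 < p := zero_lt_one.trans_le hp
  set S := ∑ k, |φ (y k)| ^ p
  have hS : 0 ≤ S := by positivity
  set γ : Fin n → ℝ := fun k => SignType.sign (φ (y k)) * |φ (y k)| ^ (p - 1)
  have hγ : ∀ k, |γ k| ≤ |φ (y k)| ^ (p - 1) := fun k => by
    rw [abs_mul, abs_of_nonneg (Real.rpow_nonneg (abs_nonneg _) _)]
    refine mul_le_of_le_one_left (Real.rpow_nonneg (abs_nonneg _) _) ?_
    rcases lt_trichotomy (φ (y k)) 0 with h | h | h <;> simp [h]
  have hφγ : φ (∑ k, γ k • y k) = S := by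
    rw [X.apply_sum_smul_of_mem_dualBall hφ _ _ fun k _ => hy k]
    refine Finset.sum_congr rfl fun k _ => ?_
    rw [show γ k * φ (y k) = |φ (y k)| ^ (p - 1) * (SignType.sign (φ (y k)) * φ (y k)) by
        simp only [γ]; ring, sign_mul_self, Real.rpow_sub_one_mul_self (abs_nonneg _) hp0.ne']
  have hSle : S ≤ S ^ ((p - 1) / p) * X.nrm (pSum p y) :=
    calc S = φ (∑ k, γ k • y k) := hφγ.symm
      _ ≤ X.nrm (∑ k, γ k • y k) :=
          (le_abs_self _).trans (hφ.2.2 _ (X.sum_mem _ fun k _ => X.smul_mem _ _ (hy k)))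
      _ ≤ S ^ ((p - 1) / p) * X.nrm (pSum p y) :=
          X.nrm_sum_smul_le hp hy (fun _ => abs_nonneg _) hγ
  rcases hS.eq_or_lt with hS0 | hS0
  · rw [← hS0, Real.zero_rpow (inv_pos.2 hp0).ne']
    exact X.nrm_nonneg _
  · have hsplit : S ^ ((p - 1) / p) * S ^ p⁻¹ = S := by
      rw [← Real.rpow_add hS0, show (p - 1) / p + p⁻¹ = 1 by field_simp; ring, Real.rpow_one]
    exact le_of_mul_le_mul_left (hsplit.trans_le hSle) (Real.rpow_pos_of_pos hS0 _)

lemma iSup_dualBall_le_nrm_pSum {p : ℝ} (hp : 1 ≤ p) {n : ℕ}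
    {y : Fin n → (Ω →ₘ[μ] ℝ)} (hy : ∀ k, X.mem (y k)) :
    ⨆ φ : dualBall X.mem X.nrm, (∑ k, |φ.1 (y k)| ^ p) ^ p⁻¹ ≤ X.nrm (pSum p y) := by
  have : Nonempty (dualBall X.mem X.nrm) :=
    ⟨⟨0, fun _ _ _ _ => by simp, fun _ _ _ => by simp, fun f _ => by simpa using X.nrm_nonneg f⟩⟩
  exact ciSup_le fun φ => X.sum_abs_rpow_rpow_inv_le_nrm_pSum hp hy φ.2

end BFL

end Lattice

theorem statement13_general {Ω : Type} [MeasurableSpace Ω] (μ : Measure Ω)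
    (X : BFL Ω μ) (p q : ℝ) (hp : 1 ≤ p) (hpq : p < q)
    {E : Type} [NormedAddCommGroup E] [NormedSpace ℝ E]
    (T : (Ω →ₘ[μ] ℝ) → E) (hT : IsBddOpE X T) :
    ((∃ C > 0, ∀ (n : ℕ) (x : Fin n → (Ω →ₘ[μ] ℝ)), (∀ k, X.mem (x k)) →
        (∑ k, ‖T (x k)‖ ^ p) ^ p⁻¹ ≤
          C * ⨆ φ : ↥(dualBall X.mem X.nrm), (∑ k, |φ.1 (x k)| ^ p) ^ p⁻¹) →
      (∃ C > 0, ∀ (n : ℕ) (x : Fin n → (Ω →ₘ[μ] ℝ)), (∀ k, X.mem (x k)) →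
        (∑ k, ‖T (x k)‖ ^ q) ^ q⁻¹ ≤ C * strongSup X.nrm p q x)) ∧
    (∀ C : ℝ, 0 < C →
      (∀ (n : ℕ) (x : Fin n → (Ω →ₘ[μ] ℝ)), (∀ k, X.mem (x k)) →
        (∑ k, ‖T (x k)‖ ^ q) ^ q⁻¹ ≤ C * strongSup X.nrm p q x) →
      ∀ (n : ℕ) (x : Fin n → (Ω →ₘ[μ] ℝ)), (∀ k, X.mem (x k)) →
        (∑ k, ‖T (x k)‖ ^ q) ^ q⁻¹ ≤ C * X.nrm (pSum q x)) := by
  refine ⟨fun ⟨C, hC, hsumming⟩ => ⟨C, hC, fun n x hx => ?_⟩, fun C hC hconcave n x hx => ?_⟩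
  · obtain ⟨β, hβ0, hβ, hβx_eq⟩ := Real.exists_sum_mul_rpow_rpow_inv_eq (s := Finset.univ)
      (zero_lt_one.trans_le hp) hpq fun k => norm_nonneg (T (x k))
    have hβx : ∀ k, X.mem (β k • x k) := fun k => X.smul_mem _ _ (hx k)
    have hβ_mem : β ∈ strongBall p q n :=
      (mem_strongBall_iff hpq.ne).2 (by simpa only [abs_of_nonneg (hβ0 _)] using hβ)
    calc (∑ k, ‖T (x k)‖ ^ q) ^ q⁻¹ = (∑ k, ‖T (β k • x k)‖ ^ p) ^ p⁻¹ := by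
          simp_rw [← hβx_eq, hT.2.1 _ _ (hx _), norm_smul, Real.norm_of_nonneg (hβ0 _)]
      _ ≤ C * ⨆ φ : dualBall X.mem X.nrm, (∑ k, |φ.1 (β k • x k)| ^ p) ^ p⁻¹ :=
          hsumming n _ hβx
      _ ≤ C * strongSup X.nrm p q x := by
          gcongr
          exact (X.iSup_dualBall_le_nrm_pSum hp hβx).trans
            (X.nrm_pSum_smul_le_strongSup hp hpq hx hβ_mem)
  · exact (hconcave n x hx).trans
      (mul_le_mul_of_nonneg_left (X.strongSup_le_nrm_pSum hp hpq hx) hC.le)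

/-- for `1 ≤ p < q` and a bounded operator `T` from a Banach function
lattice into a Banach space: (a) if `T` is `p`-summing then `T` is `p`-strongly
`q`-concave; (b) if `T` is `p`-strongly `q`-concave with constant `C` then `T` is
`q`-concave with constant `C`. -/
theorem statement13 {Ω : Type} [MeasurableSpace Ω] (μ : Measure Ω) [SigmaFinite μ]
    (X : BFL Ω μ) (p q : ℝ) (hp : 1 ≤ p) (hpq : p < q)
    {E : Type} [NormedAddCommGroup E] [NormedSpace ℝ E] [CompleteSpace E]
    (T : (Ω →ₘ[μ] ℝ) → E) (hT : IsBddOpE X T) :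
    ((∃ C > 0, ∀ (n : ℕ) (x : Fin n → (Ω →ₘ[μ] ℝ)), (∀ k, X.mem (x k)) →
        (∑ k, ‖T (x k)‖ ^ p) ^ p⁻¹ ≤
          C * ⨆ φ : ↥(dualBall X.mem X.nrm), (∑ k, |φ.1 (x k)| ^ p) ^ p⁻¹) →
      (∃ C > 0, ∀ (n : ℕ) (x : Fin n → (Ω →ₘ[μ] ℝ)), (∀ k, X.mem (x k)) →
        (∑ k, ‖T (x k)‖ ^ q) ^ q⁻¹ ≤ C * strongSup X.nrm p q x)) ∧
    (∀ C : ℝ, 0 < C →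
      (∀ (n : ℕ) (x : Fin n → (Ω →ₘ[μ] ℝ)), (∀ k, X.mem (x k)) →
        (∑ k, ‖T (x k)‖ ^ q) ^ q⁻¹ ≤ C * strongSup X.nrm p q x) →
      ∀ (n : ℕ) (x : Fin n → (Ω →ₘ[μ] ℝ)), (∀ k, X.mem (x k)) →
        (∑ k, ‖T (x k)‖ ^ q) ^ q⁻¹ ≤ C * X.nrm (pSum q x)) :=
  statement13_general μ X p q hp hpq T hT

end
end

section
/- Let 1 < p < q < ∞ with 1/r = 1/p − 1/q, let (Ω, Σ, μ) be a σ-finite measure space possessing a measurable partition (A_k)_{k=1}^∞ of Ω with μ(A_k) = 1 for every k, and let Y := { f ∈ L^0(μ) : ( ∫_{A_k} |f|^p dμ )_k ∈ ℓ^{q/p} } with norm ‖f‖_Y := ( ∑_{k=1}^∞ ( ∫_{A_k} |f|^p dμ )^{q/p} )^{1/q}. Then the linear map R(f) := ( 2^{−k/q} ∫_{A_k} f dμ )_{k=1}^∞ satisfies ‖R(f)‖_{ℓ^q} ≤ ‖f‖_Y for all f ∈ Y (so R : Y → ℓ^q is bounded), and R is p-strongly q-concave with constant 1: for all f_1, …,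 f_n ∈ Y, ∑_{k=1}^n ‖R(f_k)‖_{ℓ^q}^q ≤ sup_{(β_k) ∈ B_r^n} ‖ ( ∑_{k=1}^n |β_k f_k|^p )^{1/p} ‖_Y^q. -/
open MeasureTheory Filter

noncomputable section

open scoped ENNReal

/-! On a block `A_k` of measure one, Jensen's inequality gives `|∫_{A_k} f|^p ≤ ∫_{A_k} |f|^p`,
which bounds the `k`-th coordinate of `R f`; as `∑_k 2^{-(k+1)} = 1`, this gives the first claim.
For the concavity, fix a block `A_k`, put `c_i = ∫_{A_k} f_i` and take
`β_i = (|c_i|^q / ∑_j |c_j|^q)^{1/r}`, a unit vector of `ℓ_r^n`. Then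
`∑_i |β_i c_i|^p = (∑_i |c_i|^q)^{p/q}`, so by Jensen `∑_i |c_i|^q` is at most the `k`-th summand
of `‖(∑_i |β_i f_i|^p)^{1/p}‖_Y^q`, hence at most the supremum over `B_r^n`. Weighting by
`2^{-(k+1)}` and summing over `k` concludes. -/

theorem ofReal_abs_integral_rpow_le_lintegral {α : Type*} [MeasurableSpace α] {ν : Measure α}
    [IsProbabilityMeasure ν] {p : ℝ} (hp : 1 ≤ p) {f : α → ℝ} (hf : AEStronglyMeasurable f ν) :
    ENNReal.ofReal |∫ x, f x ∂ν| ^ p ≤ ∫⁻ x, ENNReal.ofReal (|f x| ^ p) ∂ν := by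
  have hp0 : 0 < p := one_pos.trans_le hp
  have jensen := eLpNorm'_le_eLpNorm'_of_exponent_le one_pos hp ν hf
  simp only [eLpNorm', ENNReal.rpow_one, ne_eq, one_ne_zero, not_false_eq_true, div_self]
    at jensen
  calc ENNReal.ofReal |∫ x, f x ∂ν| ^ p = ‖∫ x, f x ∂ν‖ₑ ^ p := by rw [Real.enorm_eq_ofReal_abs]
    _ ≤ (∫⁻ x, ‖f x‖ₑ ∂ν) ^ p := by gcongr; exact enorm_integral_le_lintegral_enorm _
    _ ≤ ((∫⁻ x, ‖f x‖ₑ ^ p ∂ν) ^ (1 / p)) ^ p := by gcongr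
    _ = ∫⁻ x, ENNReal.ofReal (|f x| ^ p) ∂ν := by
      rw [← ENNReal.rpow_mul, one_div_mul_cancel hp0.ne', ENNReal.rpow_one]
      simp_rw [Real.enorm_eq_ofReal_abs, ENNReal.ofReal_rpow_of_nonneg (abs_nonneg _) hp0.le]

theorem ofReal_abs_setIntegral_rpow_le_setLIntegral {α : Type*} [MeasurableSpace α]
    {μ : Measure α} {S : Set α} (hS : μ S = 1) {p : ℝ} (hp : 1 ≤ p) {f : α → ℝ}
    (hf : AEStronglyMeasurable f (μ.restrict S)) :
    ENNReal.ofReal |∫ ω in S, f ω ∂μ| ^ p ≤ ∫⁻ ω in S, ENNReal.ofReal (|f ω| ^ p) ∂μ :=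
  have : IsProbabilityMeasure (μ.restrict S) := ⟨by rw [Measure.restrict_apply_univ, hS]⟩
  ofReal_abs_integral_rpow_le_lintegral hp hf

theorem ofReal_abs_setIntegral_rpow_le {α : Type*} [MeasurableSpace α] {μ : Measure α}
    {S : Set α} (hS : μ S = 1) {p q : ℝ} (hp : 1 ≤ p) (hq : 0 ≤ q) {f : α → ℝ}
    (hf : AEStronglyMeasurable f (μ.restrict S)) :
    ENNReal.ofReal |∫ ω in S, f ω ∂μ| ^ q
      ≤ (∫⁻ ω in S, ENNReal.ofReal (|f ω| ^ p) ∂μ) ^ (q / p) :=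
  calc ENNReal.ofReal |∫ ω in S, f ω ∂μ| ^ q
      = (ENNReal.ofReal |∫ ω in S, f ω ∂μ| ^ p) ^ (q / p) := by
        rw [← ENNReal.rpow_mul, mul_div_cancel₀ _ (one_pos.trans_le hp).ne']
    _ ≤ _ := by gcongr; exact ofReal_abs_setIntegral_rpow_le_setLIntegral hS hp hf

theorem ofReal_abs_two_rpow_div_mul_rpow {q : ℝ} (hq : 0 < q) (t x : ℝ) :
    ENNReal.ofReal |(2 : ℝ) ^ (t / q) * x| ^ q = 2 ^ t * ENNReal.ofReal |x| ^ q := by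
  rw [abs_mul, ENNReal.ofReal_mul (abs_nonneg _), ENNReal.mul_rpow_of_nonneg _ _ hq.le,
    abs_of_pos (by positivity), ← ENNReal.ofReal_rpow_of_pos two_pos, ← ENNReal.rpow_mul,
    div_mul_cancel₀ _ hq.ne', ENNReal.ofReal_ofNat]

theorem tsum_two_rpow_neg_succ : ∑' k : ℕ, (2 : ℝ≥0∞) ^ (-((k : ℝ) + 1)) = 1 := by
  have h : ∀ k : ℕ, (2 : ℝ≥0∞) ^ (-((k : ℝ) + 1)) = 2⁻¹ * 2⁻¹ ^ k := fun k => by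
    rw [ENNReal.rpow_neg, ← Nat.cast_succ, ENNReal.rpow_natCast, ENNReal.inv_pow, pow_succ']
  simp_rw [h]
  rw [ENNReal.tsum_mul_left, ENNReal.tsum_geometric, ENNReal.one_sub_inv_two, inv_inv,
    ENNReal.inv_mul_cancel two_ne_zero ENNReal.ofNat_ne_top]

section PSum

variable {Ω : Type} [MeasurableSpace Ω] {μ : Measure Ω} {p : ℝ}

theorem ofReal_rpow_abs_pSum_smul_ae (hp : 0 < p) {n : ℕ} (f : Fin n → (Ω →ₘ[μ] ℝ))
    (β : Fin n → ℝ) :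
    ∀ᵐ ω ∂μ, ENNReal.ofReal (|(pSum p fun i => β i • f i) ω| ^ p)
      = ∑ i, ENNReal.ofReal (|β i| ^ p) * ENNReal.ofReal (|f i ω| ^ p) := by
  have hsmul : ∀ᵐ ω ∂μ, ∀ i, (β i • f i) ω = β i * f i ω :=
    ae_all_iff.2 fun i => AEEqFun.coeFn_smul (β i) (f i)
  have hpSum : (pSum p fun i => β i • f i) =ᵐ[μ] fun ω => (∑ i, |(β i • f i) ω| ^ p) ^ p⁻¹ :=
    AEEqFun.coeFn_mk _ _
  filter_upwards [hpSum, hsmul] with ω hpSum hsmulω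
  have hsum : 0 ≤ ∑ i, |β i * f i ω| ^ p := by positivity
  rw [hpSum]
  simp_rw [hsmulω]
  rw [abs_of_nonneg (by positivity), ← Real.rpow_mul hsum, inv_mul_cancel₀ hp.ne',
    Real.rpow_one, ENNReal.ofReal_sum_of_nonneg fun i _ => by positivity]
  refine Finset.sum_congr rfl fun i _ => ?_
  rw [abs_mul, Real.mul_rpow (abs_nonneg _) (abs_nonneg _), ENNReal.ofReal_mul (by positivity)]

theorem setLIntegral_rpow_abs_pSum_smul (hp : 0 < p) {n : ℕ} (f : Fin n → (Ω →ₘ[μ] ℝ))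
    (β : Fin n → ℝ) (S : Set Ω) :
    ∫⁻ ω in S, ENNReal.ofReal (|(pSum p fun i => β i • f i) ω| ^ p) ∂μ
      = ∑ i, ENNReal.ofReal (|β i| ^ p) * ∫⁻ ω in S, ENNReal.ofReal (|f i ω| ^ p) ∂μ := by
  have hmeas : ∀ i, AEMeasurable (fun ω => ENNReal.ofReal (|f i ω| ^ p)) (μ.restrict S) :=
    fun i => ((f i).aemeasurable.abs.pow_const p).ennreal_ofReal.restrict
  rw [lintegral_congr_ae (ae_restrict_of_ae (ofReal_rpow_abs_pSum_smul_ae hp f β)),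
    lintegral_finsetSum' _ fun i _ => (hmeas i).const_mul _]
  exact Finset.sum_congr rfl fun i _ => lintegral_const_mul'' _ (hmeas i)

end PSum

theorem abs_le_one_of_mem_strongBall {p q : ℝ} (hp : 0 < p) (hpq : p < q) {n : ℕ}
    {β : Fin n → ℝ} (hβ : β ∈ strongBall p q n) (i : Fin n) : |β i| ≤ 1 := by
  simp only [strongBall, if_neg hpq.ne, Set.mem_ofPred_eq] at hβ
  have hr : 0 < (1 / p - 1 / q)⁻¹ := inv_pos.2 (sub_pos.2 (one_div_lt_one_div_of_lt hp hpq))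
  by_contra! h
  have : 1 < |β i| ^ (1 / p - 1 / q)⁻¹ := Real.one_lt_rpow h hr
  have := (Finset.single_le_sum (f := fun j => |β j| ^ (1 / p - 1 / q)⁻¹)
    (fun j _ => by positivity) (Finset.mem_univ i)).trans hβ
  linarith

theorem exists_mem_strongBall_sum_rpow_eq {p q : ℝ} (hp : 0 < p) (hpq : p < q) {n : ℕ}
    (c : Fin n → ℝ) :
    ∃ β ∈ strongBall p q n, ∑ i, |β i| ^ p * |c i| ^ p = (∑ i, |c i| ^ q) ^ (p / q) := by
  have hq : 0 < q := hp.trans hpq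
  have he : 0 < 1 / p - 1 / q := sub_pos.2 (one_div_lt_one_div_of_lt hp hpq)
  simp only [strongBall, if_neg hpq.ne, Set.mem_ofPred_eq]
  set C := ∑ i, |c i| ^ q with hC
  rcases (show 0 ≤ C by positivity).eq_or_lt with hC0 | hC0
  · refine ⟨0, ?_, ?_⟩
    · simp only [Pi.zero_apply, abs_zero, Real.zero_rpow (inv_pos.2 he).ne',
        Finset.sum_const_zero, zero_le_one]
    simp [← hC0, Real.zero_rpow hp.ne', Real.zero_rpow (div_pos hp hq).ne']
  have hw : ∀ i, 0 ≤ |c i| ^ q / C := fun i => by positivity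
  refine ⟨fun i => (|c i| ^ q / C) ^ (1 / p - 1 / q), ?_, ?_⟩
  · simp_rw [abs_of_nonneg (Real.rpow_nonneg (hw _) _), ← Real.rpow_mul (hw _),
      mul_inv_cancel₀ he.ne', Real.rpow_one]
    rw [← Finset.sum_div, div_self hC0.ne']
  · have hexp : (1 / p - 1 / q) * p = 1 - p / q := by field_simp
    have hsum : q * (1 - p / q) + p = q := by field_simp; ring
    have hterm : ∀ i, |(|c i| ^ q / C) ^ (1 / p - 1 / q)| ^ p * |c i| ^ p
        = |c i| ^ q / C ^ (1 - p / q) := fun i => by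
      rw [abs_of_nonneg (Real.rpow_nonneg (hw _) _), ← Real.rpow_mul (hw _), hexp,
        Real.div_rpow (by positivity) hC0.le, ← Real.rpow_mul (abs_nonneg _),
        div_mul_eq_mul_div, ← Real.rpow_add' (abs_nonneg _) (by rw [hsum]; exact hq.ne'), hsum]
    rw [Finset.sum_congr rfl fun i _ => hterm i, ← Finset.sum_div, ← hC,
      Real.rpow_sub hC0, Real.rpow_one, div_div_cancel₀ hC0.ne']

/-- `‖g‖_Y ^ q` for the norm `‖g‖_Y = (∑_k (∫_{A_k} |g|^p dμ)^{q/p})^{1/q}`. -/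
def blockNormRpow {Ω : Type} [MeasurableSpace Ω] (μ : Measure Ω) (A : ℕ → Set Ω) (p q : ℝ)
    (g : Ω →ₘ[μ] ℝ) : ℝ≥0∞ :=
  ∑' k, (∫⁻ ω in A k, ENNReal.ofReal (|g ω| ^ p) ∂μ) ^ (q / p)

def blockNorm {Ω : Type} [MeasurableSpace Ω] (μ : Measure Ω) (A : ℕ → Set Ω) (p q : ℝ)
    (g : Ω →ₘ[μ] ℝ) : ℝ :=
  (blockNormRpow μ A p q g ^ q⁻¹).toReal

section BlockNorm

variable {Ω : Type} [MeasurableSpace Ω] {μ : Measure Ω} {A : ℕ → Set Ω} {p q : ℝ}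

theorem ofReal_blockNorm_rpow (hq : 0 < q) {g : Ω →ₘ[μ] ℝ}
    (hg : blockNormRpow μ A p q g ≠ ⊤) :
    ENNReal.ofReal (blockNorm μ A p q g ^ q) = blockNormRpow μ A p q g := by
  rw [blockNorm, ENNReal.toReal_rpow, ← ENNReal.rpow_mul, inv_mul_cancel₀ hq.ne',
    ENNReal.rpow_one, ENNReal.ofReal_toReal hg]

theorem exists_blockNormRpow_pSum_smul_le (hp : 0 < p) (hpq : p ≤ q) {n : ℕ}
    {f : Fin n → (Ω →ₘ[μ] ℝ)} (hf : ∀ i, blockNormRpow μ A p q (f i) < ⊤) :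
    ∃ B < ⊤, ∀ β : Fin n → ℝ, (∀ i, |β i| ≤ 1) →
      blockNormRpow μ A p q (pSum p fun i => β i • f i) ≤ B := by
  have hs : 1 ≤ q / p := (one_le_div hp).2 hpq
  refine ⟨(n : ℝ≥0∞) ^ (q / p - 1) * ∑ i, blockNormRpow μ A p q (f i),
    ENNReal.mul_lt_top (ENNReal.rpow_lt_top_of_nonneg (sub_nonneg.2 hs) (ENNReal.natCast_ne_top n))
      (ENNReal.sum_lt_top.2 fun i _ => hf i), fun β hβ => ?_⟩
  calc blockNormRpow μ A p q (pSum p fun i => β i • f i)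
      ≤ ∑' k, (∑ i, ∫⁻ ω in A k, ENNReal.ofReal (|f i ω| ^ p) ∂μ) ^ (q / p) := by
        refine ENNReal.tsum_le_tsum fun k => ?_
        rw [setLIntegral_rpow_abs_pSum_smul hp]
        gcongr with i
        calc ENNReal.ofReal (|β i| ^ p) * _ ≤ 1 * _ := by
              gcongr
              exact ENNReal.ofReal_le_one.2 (Real.rpow_le_one (abs_nonneg _) (hβ i) hp.le)
          _ = _ := one_mul _
    _ ≤ ∑' k, (n : ℝ≥0∞) ^ (q / p - 1) *
          ∑ i, (∫⁻ ω in A k, ENNReal.ofReal (|f i ω| ^ p) ∂μ) ^ (q / p) := by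
        refine ENNReal.tsum_le_tsum fun k => ?_
        simpa using ENNReal.rpow_sum_le_const_mul_sum_rpow Finset.univ
          (fun i => ∫⁻ ω in A k, ENNReal.ofReal (|f i ω| ^ p) ∂μ) hs
    _ = (n : ℝ≥0∞) ^ (q / p - 1) * ∑ i, blockNormRpow μ A p q (f i) := by
        rw [ENNReal.tsum_mul_left, Summable.tsum_finsetSum fun i _ => ENNReal.summable]
        rfl

theorem bddAbove_blockNorm_pSum_strongBall (hp : 0 < p) (hpq : p < q) {n : ℕ}
    {f : Fin n → (Ω →ₘ[μ] ℝ)} (hf : ∀ i, blockNormRpow μ A p q (f i) < ⊤) :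
    BddAbove (Set.range fun β : strongBall p q n =>
      blockNorm μ A p q (pSum p fun i => β.1 i • f i)) := by
  obtain ⟨B, hB, hle⟩ := exists_blockNormRpow_pSum_smul_le hp hpq.le hf
  have hq : 0 < q := hp.trans hpq
  refine ⟨(B ^ q⁻¹).toReal, ?_⟩
  rintro _ ⟨β, rfl⟩
  exact ENNReal.toReal_mono (ENNReal.rpow_ne_top_of_nonneg (inv_nonneg.2 hq.le) hB.ne)
    (by gcongr; exact hle β (abs_le_one_of_mem_strongBall hp hpq β.2))

theorem sum_ofReal_abs_setIntegral_rpow_le_strongSup (hp : 1 ≤ p) (hpq : p < q) {k : ℕ}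
    (hA : μ (A k) = 1) {n : ℕ} {f : Fin n → (Ω →ₘ[μ] ℝ)}
    (hf : ∀ i, blockNormRpow μ A p q (f i) < ⊤) :
    ∑ i, ENNReal.ofReal |∫ ω in A k, f i ω ∂μ| ^ q
      ≤ ENNReal.ofReal (strongSup (blockNorm μ A p q) p q f ^ q) := by
  have hp0 : 0 < p := one_pos.trans_le hp
  have hq : 0 < q := hp0.trans hpq
  set c : Fin n → ℝ := fun i => ∫ ω in A k, f i ω ∂μ
  obtain ⟨β, hβ, hβc⟩ := exists_mem_strongBall_sum_rpow_eq hp0 hpq c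
  set g := pSum p fun i => β i • f i
  obtain ⟨B, hB, hle⟩ := exists_blockNormRpow_pSum_smul_le hp0 hpq.le hf
  have hg : blockNormRpow μ A p q g ≠ ⊤ :=
    ((hle β (abs_le_one_of_mem_strongBall hp0 hpq hβ)).trans_lt hB).ne
  calc ∑ i, ENNReal.ofReal |c i| ^ q = ENNReal.ofReal (∑ i, |c i| ^ q) := by
        rw [ENNReal.ofReal_sum_of_nonneg fun i _ => by positivity]
        exact Finset.sum_congr rfl fun i _ => ENNReal.ofReal_rpow_of_nonneg (abs_nonneg _) hq.le
    _ = ENNReal.ofReal (∑ i, |β i| ^ p * |c i| ^ p) ^ (q / p) := by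
        rw [hβc, ENNReal.ofReal_rpow_of_nonneg (by positivity) (by positivity),
          ← Real.rpow_mul (by positivity), show p / q * (q / p) = 1 by field_simp, Real.rpow_one]
    _ = (∑ i, ENNReal.ofReal (|β i| ^ p) * (ENNReal.ofReal |c i| ^ p)) ^ (q / p) := by
        rw [ENNReal.ofReal_sum_of_nonneg fun i _ => by positivity]
        refine congrArg (· ^ (q / p)) (Finset.sum_congr rfl fun i _ => ?_)
        rw [ENNReal.ofReal_mul (by positivity),
          ENNReal.ofReal_rpow_of_nonneg (abs_nonneg _) hp0.le]
    _ ≤ (∑ i, ENNReal.ofReal (|β i| ^ p) *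
          ∫⁻ ω in A k, ENNReal.ofReal (|f i ω| ^ p) ∂μ) ^ (q / p) := by
        gcongr with i
        exact ofReal_abs_setIntegral_rpow_le_setLIntegral hA hp
          (f i).aestronglyMeasurable.restrict
    _ = (∫⁻ ω in A k, ENNReal.ofReal (|g ω| ^ p) ∂μ) ^ (q / p) := by
        rw [setLIntegral_rpow_abs_pSum_smul hp0]
    _ ≤ blockNormRpow μ A p q g := ENNReal.le_tsum (f := fun k =>
          (∫⁻ ω in A k, ENNReal.ofReal (|g ω| ^ p) ∂μ) ^ (q / p)) k
    _ = ENNReal.ofReal (blockNorm μ A p q g ^ q) := (ofReal_blockNorm_rpow hq hg).symm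
    _ ≤ ENNReal.ofReal (strongSup (blockNorm μ A p q) p q f ^ q) := by
        refine ENNReal.ofReal_le_ofReal (Real.rpow_le_rpow ENNReal.toReal_nonneg ?_ hq.le)
        exact le_ciSup (bddAbove_blockNorm_pSum_strongBall hp0 hpq hf) ⟨β, hβ⟩

end BlockNorm

theorem statement15_general {Ω : Type} [MeasurableSpace Ω] (μ : Measure Ω)
    (p q : ℝ) (hp : 1 < p) (hpq : p < q)
    (A : ℕ → Set Ω)
    (hA1 : ∀ k, μ (A k) = 1) :
    (∀ f : Ω →ₘ[μ] ℝ,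
      (∑' k : ℕ, (∫⁻ ω in A k, ENNReal.ofReal (|f ω| ^ p) ∂μ) ^ (q / p)) < ⊤ →
      (∑' k : ℕ,
          (ENNReal.ofReal |(2 : ℝ) ^ (-((k : ℝ) + 1) / q) * ∫ ω in A k, f ω ∂μ|) ^ q) ≤
        ∑' k : ℕ, (∫⁻ ω in A k, ENNReal.ofReal (|f ω| ^ p) ∂μ) ^ (q / p)) ∧
    (∀ (n : ℕ) (f : Fin n → (Ω →ₘ[μ] ℝ)),
      (∀ i, (∑' k : ℕ, (∫⁻ ω in A k, ENNReal.ofReal (|f i ω| ^ p) ∂μ) ^ (q / p)) < ⊤) →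
      (∑ i, ∑' k : ℕ,
          (ENNReal.ofReal |(2 : ℝ) ^ (-((k : ℝ) + 1) / q) * ∫ ω in A k, f i ω ∂μ|) ^ q) ≤
        ENNReal.ofReal
          ((strongSup
              (fun g =>
                ((∑' k : ℕ, (∫⁻ ω in A k, ENNReal.ofReal (|g ω| ^ p) ∂μ) ^ (q / p)) ^
                    q⁻¹).toReal)
              p q f) ^ q)) := by
  have hq : 0 < q := (one_pos.trans hp).trans hpq
  refine ⟨fun f _ => ENNReal.tsum_le_tsum fun k => ?_, fun n f hf => ?_⟩
  · rw [ofReal_abs_two_rpow_div_mul_rpow hq]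
    calc (2 : ℝ≥0∞) ^ (-((k : ℝ) + 1)) * ENNReal.ofReal |∫ ω in A k, f ω ∂μ| ^ q
        ≤ 1 * (∫⁻ ω in A k, ENNReal.ofReal (|f ω| ^ p) ∂μ) ^ (q / p) :=
          mul_le_mul' (tsum_two_rpow_neg_succ ▸ ENNReal.le_tsum k)
            (ofReal_abs_setIntegral_rpow_le (hA1 k) hp.le hq.le f.aestronglyMeasurable.restrict)
      _ = _ := one_mul _
  · rw [← Summable.tsum_finsetSum fun i _ => ENNReal.summable]
    calc ∑' k : ℕ, ∑ i,
          ENNReal.ofReal |(2 : ℝ) ^ (-((k : ℝ) + 1) / q) * ∫ ω in A k, f i ω ∂μ| ^ q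
        = ∑' k : ℕ, (2 : ℝ≥0∞) ^ (-((k : ℝ) + 1)) *
            ∑ i, ENNReal.ofReal |∫ ω in A k, f i ω ∂μ| ^ q := by
          simp_rw [ofReal_abs_two_rpow_div_mul_rpow hq, Finset.mul_sum]
      _ ≤ ∑' k : ℕ, (2 : ℝ≥0∞) ^ (-((k : ℝ) + 1)) *
            ENNReal.ofReal (strongSup (blockNorm μ A p q) p q f ^ q) :=
          ENNReal.tsum_le_tsum fun k =>
            mul_le_mul_right (sum_ofReal_abs_setIntegral_rpow_le_strongSup hp.le hpq (hA1 k) hf) _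
      _ = ENNReal.ofReal (strongSup (blockNorm μ A p q) p q f ^ q) := by
          rw [ENNReal.tsum_mul_right, tsum_two_rpow_neg_succ, one_mul]

/-- for `1 < p < q` and a σ-finite measure space with a measurable
partition `(A_k)` of measure-one sets, let `Y` be the space with norm
`‖f‖_Y = (∑_k (∫_{A_k} |f|^p dμ)^{q/p})^{1/q}`. Then the evaluation map
`R f = (2^{-k/q} ∫_{A_k} f dμ)_k` satisfies `‖R f‖_{ℓ^q} ≤ ‖f‖_Y` for `f ∈ Y`, and `R`
is `p`-strongly `q`-concave with constant 1 (the inequalities are stated with the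
`ℓ^q`-norms raised to the power `q`, in `ℝ≥0∞`). -/
theorem statement15 {Ω : Type} [MeasurableSpace Ω] (μ : Measure Ω) [SigmaFinite μ]
    (p q : ℝ) (hp : 1 < p) (hpq : p < q)
    (A : ℕ → Set Ω) (hAm : ∀ k, MeasurableSet (A k))
    (hAdisj : Pairwise (Function.onFun Disjoint A)) (hAcover : (⋃ k, A k) = Set.univ)
    (hA1 : ∀ k, μ (A k) = 1) :
    (∀ f : Ω →ₘ[μ] ℝ,
      (∑' k : ℕ, (∫⁻ ω in A k, ENNReal.ofReal (|f ω| ^ p) ∂μ) ^ (q / p)) < ⊤ →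
      (∑' k : ℕ,
          (ENNReal.ofReal |(2 : ℝ) ^ (-((k : ℝ) + 1) / q) * ∫ ω in A k, f ω ∂μ|) ^ q) ≤
        ∑' k : ℕ, (∫⁻ ω in A k, ENNReal.ofReal (|f ω| ^ p) ∂μ) ^ (q / p)) ∧
    (∀ (n : ℕ) (f : Fin n → (Ω →ₘ[μ] ℝ)),
      (∀ i, (∑' k : ℕ, (∫⁻ ω in A k, ENNReal.ofReal (|f i ω| ^ p) ∂μ) ^ (q / p)) < ⊤) →
      (∑ i, ∑' k : ℕ,
          (ENNReal.ofReal |(2 : ℝ) ^ (-((k : ℝ) + 1) / q) * ∫ ω in A k, f i ω ∂μ|) ^ q) ≤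
        ENNReal.ofReal
          ((strongSup
              (fun g =>
                ((∑' k : ℕ, (∫⁻ ω in A k, ENNReal.ofReal (|g ω| ^ p) ∂μ) ^ (q / p)) ^
                    q⁻¹).toReal)
              p q f) ^ q)) :=
  statement15_general μ p q hp hpq A hA1

end
end

section
/- Let ([0,1], B, μ) be the Lebesgue measure space, A_k := [0, 1/2^{k−1}] for k ∈ ℕ, and let T : L^1[0,1] → ℓ^∞ be the integral evaluation operator T(x) := ( ∫_{A_k} x dμ )_{k=1}^∞. Then for every finite sequence x_1, …, x_n ∈ L^1[0,1], inf_{(α_i) ∈ B_2^n, α_i ≠ 0} ‖ sup_{1 ≤ i ≤ n} |T(x_i)| / |α_i| ‖_{ℓ^∞} ≤ sup_{(β_i) ∈ B_2^n} ‖ ∑_{i=1}^n |β_i x_i| ‖_{L^1[0,1]}, where |T(x_i)|/|α_i| and the supremum over i are taken coordinatewise in ℓ^∞. -/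
open MeasureTheory Filter

noncomputable section

open Topology

/-! With `b i = ∫ |x i|` over `[0,1]`, every coordinate of `|T (x i)|` is at most `b i`.
Taking `α` proportional to `b + δ` bounds the infimum by `‖b + δ‖₂`, hence by `‖b‖₂` as `δ → 0⁺`,
while the right side is the maximum of `∑ |β i| * b i` over the Euclidean unit ball, which is
`‖b‖₂` by Cauchy–Schwarz, attained at `β = b / ‖b‖₂`. -/

section EuclideanBallDuality

variable {ι : Type*} [Fintype ι]

theorem iSup_sum_abs_mul_eq_sqrt_sum_sq {b : ι → ℝ} (hb : ∀ i, 0 ≤ b i) :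
    ⨆ β : {β : ι → ℝ // ∑ i, β i ^ 2 ≤ 1}, ∑ i, |β.1 i| * b i = √(∑ i, b i ^ 2) := by
  set S := √(∑ i, b i ^ 2)
  have hS : S ^ 2 = ∑ i, b i ^ 2 := Real.sq_sqrt (by positivity)
  have hle : ∀ β : {β : ι → ℝ // ∑ i, β i ^ 2 ≤ 1}, ∑ i, |β.1 i| * b i ≤ S := fun β =>
    calc ∑ i, |β.1 i| * b i ≤ √(∑ i, |β.1 i| ^ 2) * S := Real.sum_mul_le_sqrt_mul_sqrt _ _ _
      _ ≤ 1 * S := by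
        gcongr
        simpa only [sq_abs, Real.sqrt_le_one] using β.2
      _ = S := one_mul S
  have hnormalized : ∑ i, (b i / S) ^ 2 ≤ 1 := by
    simp only [div_pow, ← Finset.sum_div, ← hS]
    exact div_self_le_one _
  have hattained : ∑ i, |b i / S| * b i = S := by
    simp only [abs_div, abs_of_nonneg (hb _), div_mul_eq_mul_div, ← sq, ← Finset.sum_div, ← hS]
    rw [abs_of_nonneg (Real.sqrt_nonneg _), sq, mul_self_div_self]
  have : Nonempty {β : ι → ℝ // ∑ i, β i ^ 2 ≤ 1} := ⟨⟨0, by simp⟩⟩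
  exact le_antisymm (ciSup_le hle)
    (hattained.symm.le.trans (le_ciSup ⟨S, Set.forall_mem_range.2 hle⟩ ⟨_, hnormalized⟩))

theorem iInf_iSup_div_abs_le_sqrt_sum_sq_of_pos {κ : Type*} {f : κ → ι → ℝ} {c : ι → ℝ}
    (hc : ∀ i, 0 < c i) (hfc : ∀ k i, |f k i| ≤ c i) :
    ⨅ α : {α : ι → ℝ // (∑ i, α i ^ 2 ≤ 1) ∧ ∀ i, α i ≠ 0}, ⨆ k, ⨆ i, |f k i| / |α.1 i| ≤
      √(∑ i, c i ^ 2) := by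
  set N := √(∑ i, c i ^ 2)
  have hN : N ^ 2 = ∑ i, c i ^ 2 := Real.sq_sqrt (by positivity)
  have hcN : ∀ i, c i ≤ N := fun i => Real.le_sqrt_of_sq_le
    (Finset.single_le_sum (fun j _ => sq_nonneg (c j)) (Finset.mem_univ i))
  have hball : ∑ i, (c i / N) ^ 2 ≤ 1 := by
    simp only [div_pow, ← Finset.sum_div, ← hN]
    exact div_self_le_one _
  have hne : ∀ i, c i / N ≠ 0 := fun i => (div_pos (hc i) ((hc i).trans_le (hcN i))).ne'
  refine (ciInf_le ⟨0, ?_⟩ ⟨fun i => c i / N, hball, hne⟩).trans ?_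
  · rintro _ ⟨α, rfl⟩
    exact Real.iSup_nonneg fun k => Real.iSup_nonneg fun i => by positivity
  · refine Real.iSup_le (fun k => Real.iSup_le (fun i => ?_) (Real.sqrt_nonneg _))
      (Real.sqrt_nonneg _)
    have hNpos : 0 < N := (hc i).trans_le (hcN i)
    rw [abs_div, abs_of_pos (hc i), abs_of_pos hNpos, div_div_eq_mul_div,
      div_le_iff₀ (hc i), mul_comm]
    exact mul_le_mul_of_nonneg_left (hfc k i) hNpos.le

theorem iInf_iSup_div_abs_le_sqrt_sum_sq {κ : Type*} {f : κ → ι → ℝ} {b : ι → ℝ}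
    (hb : ∀ i, 0 ≤ b i) (hfb : ∀ k i, |f k i| ≤ b i) :
    ⨅ α : {α : ι → ℝ // (∑ i, α i ^ 2 ≤ 1) ∧ ∀ i, α i ≠ 0}, ⨆ k, ⨆ i, |f k i| / |α.1 i| ≤
      √(∑ i, b i ^ 2) := by
  have hcont : Continuous fun δ : ℝ => √(∑ i, (b i + δ) ^ 2) := by fun_prop
  have hlim : Tendsto (fun δ : ℝ => √(∑ i, (b i + δ) ^ 2)) (𝓝[>] 0) (𝓝 √(∑ i, b i ^ 2)) := by
    simpa using (hcont.tendsto 0).mono_left nhdsWithin_le_nhds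
  refine ge_of_tendsto hlim (eventually_nhdsWithin_of_forall fun δ (hδ : 0 < δ) => ?_)
  exact iInf_iSup_div_abs_le_sqrt_sum_sq_of_pos (fun i => add_pos_of_nonneg_of_pos (hb i) hδ)
    fun k i => (hfb k i).trans (le_add_of_nonneg_right hδ.le)

end EuclideanBallDuality

theorem abs_setIntegral_le_setIntegral_abs_of_subset {α : Type*} [MeasurableSpace α]
    {μ : Measure α} {f : α → ℝ} {s t : Set α} (hf : IntegrableOn f t μ) (hst : s ⊆ t) :
    |∫ a in s, f a ∂μ| ≤ ∫ a in t, |f a| ∂μ :=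
  abs_integral_le_integral_abs.trans
    (setIntegral_mono_set hf.abs (Eventually.of_forall fun _ => abs_nonneg _) hst.eventuallyLE)

theorem integral_sum_abs_mul {α ι : Type*} [Fintype ι] [MeasurableSpace α] {μ : Measure α}
    {x : ι → α → ℝ} (hx : ∀ i, Integrable (x i) μ) (β : ι → ℝ) :
    ∫ a, ∑ i, |β i * x i a| ∂μ = ∑ i, |β i| * ∫ a, |x i a| ∂μ := by
  simp only [abs_mul]
  rw [integral_finsetSum _ fun i _ => (hx i).abs.const_mul _]
  simp only [integral_const_mul]

/-- the integral evaluation operator `T : L¹[0,1] → ℓ^∞`,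
`T x = (∫_{[0,1/2^{k-1}]} x dμ)_k`, satisfies
`inf_{α ∈ B₂ⁿ, αᵢ ≠ 0} ‖sup_i |T xᵢ|/|αᵢ|‖_∞ ≤ sup_{β ∈ B₂ⁿ} ‖∑ᵢ |βᵢ xᵢ|‖_{L¹[0,1]}`
for every finite sequence in `L¹[0,1]`. -/
theorem statement16 (n : ℕ) (x : Fin n → ℝ → ℝ)
    (hx : ∀ i, IntegrableOn (x i) (Set.Icc (0 : ℝ) 1)) :
    (⨅ α : {α : Fin n → ℝ // (∑ i, (α i) ^ 2 ≤ 1) ∧ ∀ i, α i ≠ 0},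
        ⨆ k : ℕ, ⨆ i : Fin n,
          |∫ t in Set.Icc (0 : ℝ) ((1 : ℝ) / 2 ^ k), x i t| / |α.1 i|) ≤
      ⨆ β : {β : Fin n → ℝ // ∑ i, (β i) ^ 2 ≤ 1},
        ∫ t in Set.Icc (0 : ℝ) 1, ∑ i, |β.1 i * x i t| := by
  set b : Fin n → ℝ := fun i => ∫ t in Set.Icc (0 : ℝ) 1, |x i t|
  have hb : ∀ i, 0 ≤ b i := fun i => integral_nonneg fun t => abs_nonneg _
  have hdyadic : ∀ k : ℕ, Set.Icc (0 : ℝ) (1 / 2 ^ k) ⊆ Set.Icc 0 1 := fun k =>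
    Set.Icc_subset_Icc_right (div_le_one_of_le₀ (one_le_pow₀ one_le_two) (by positivity))
  calc _ ≤ √(∑ i, b i ^ 2) := iInf_iSup_div_abs_le_sqrt_sum_sq hb fun k i =>
        abs_setIntegral_le_setIntegral_abs_of_subset (hx i) (hdyadic k)
    _ = ⨆ β : {β : Fin n → ℝ // ∑ i, β i ^ 2 ≤ 1}, ∑ i, |β.1 i| * b i :=
        (iSup_sum_abs_mul_eq_sqrt_sum_sq hb).symm
    _ = _ := by simp only [integral_sum_abs_mul hx, b]

end
end
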